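/- (Order-optimality transfer under the transformation g.) Let 0 < v < 1, let s = (x_s,y_s), f = (x_f,y_f) ∈ ℝ², and let q₁,…,qₙ ∈ ℝ² be distinct points. For p = (X,Y), q = (x,y) ∈ ℝ² define T_v(p,q) := (√((1−v²)(X−x)² + (Y−y)²) − v(Y−y))/(1−v²), and g(x,y) := (x/√(1−v²), y/(1−v²)). For a permutation σ of {1,…,n}, let Time(σ) := T_v(s, q_{σ(1)}) + Σ_{i=1}^{n−1} T_v(q_{σ(i)}, q_{σ(i+1)}) + T_v(q_{σ(n)}, f), and let Len(σ) := ‖g(q_{σ(1)}) − g(s)‖ + Σ_{i=1}^{n−1} ‖g(q_{σ(i+1)}) − g(q_{σ(i)})‖ + ‖g(f) − g(q_{σ(n)})‖. Then Time(σ) − Len(σ) = v(y_f − y_s)/(1−v²) for every permutation σ; in particular, a permutation σ minimizes Time if and only if it minimizes Len. -/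

import Mathlib

/-! The map `g` turns the square-root term of `T_v` into a Euclidean distance:
`T_v(p, q) = ‖g q - g p‖ + φ q - φ p` with the potential
`φ (x, y) = v y / (1 - v²)`. Along any route from `s` to `f` the potential terms telescope,
so travel time and transformed length differ by `φ f - φ s`, independently of the order. -/

open scoped BigOperators

/-- The minimum interception time for a unit-speed vehicle at `p = (X,Y)`
to catch a target starting at `q = (x,y)` moving with velocity `(0,v)`. -/
noncomputable def Tv (v : ℝ) (p q : ℝ × ℝ) : ℝ :=
  (Real.sqrt ((1 - v ^ 2) * (p.1 - q.1) ^ 2 + (p.2 - q.2) ^ 2) - v * (p.2 - q.2)) / (1 - v ^ 2)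

/-- The coordinate transformation `g(x,y) = (x/√(1−v²), y/(1−v²))`, valued in
the Euclidean plane. -/
noncomputable def gmap (v : ℝ) (p : ℝ × ℝ) : EuclideanSpace ℝ (Fin 2) :=
  (WithLp.equiv 2 (Fin 2 → ℝ)).symm ![p.1 / Real.sqrt (1 - v ^ 2), p.2 / (1 - v ^ 2)]

theorem Fin.sum_succ_sub_castSucc {G : Type*} [AddCommGroup G] {n : ℕ} (a : Fin (n + 1) → G) :
    ∑ i : Fin n, (a i.succ - a i.castSucc) = a (Fin.last n) - a 0 := by
  induction n with
  | zero => simp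
  | succ n ih =>
    rw [Fin.sum_univ_castSucc]
    simp only [Fin.succ_castSucc]
    rw [ih fun i ↦ a i.castSucc, Fin.succ_last, Fin.castSucc_zero]
    abel

theorem path_cost_add_potential {α : Type*} {c d : α → α → ℝ} {φ : α → ℝ}
    (hcd : ∀ p q, c p q = d p q + (φ q - φ p)) (s f : α) {n : ℕ} (x : Fin (n + 1) → α) :
    c s (x 0) + (∑ i : Fin n, c (x i.castSucc) (x i.succ)) + c (x (Fin.last n)) f
      = d s (x 0) + (∑ i : Fin n, d (x i.castSucc) (x i.succ)) + d (x (Fin.last n)) f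
        + (φ f - φ s) := by
  have hsum := Fin.sum_succ_sub_castSucc (φ ∘ x)
  simp only [Function.comp_apply] at hsum
  simp only [hcd, Finset.sum_add_distrib, hsum]
  ring

theorem norm_gmap_sub {v : ℝ} (hv : v ^ 2 < 1) (p q : ℝ × ℝ) :
    ‖gmap v q - gmap v p‖
      = Real.sqrt ((1 - v ^ 2) * (p.1 - q.1) ^ 2 + (p.2 - q.2) ^ 2) / (1 - v ^ 2) := by
  have hw : 0 < 1 - v ^ 2 := sub_pos.mpr hv
  have hsq : Real.sqrt (1 - v ^ 2) ^ 2 = 1 - v ^ 2 := Real.sq_sqrt hw.le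
  have hcoords : (q.1 / Real.sqrt (1 - v ^ 2) - p.1 / Real.sqrt (1 - v ^ 2)) ^ 2
      + (q.2 / (1 - v ^ 2) - p.2 / (1 - v ^ 2)) ^ 2
      = ((1 - v ^ 2) * (p.1 - q.1) ^ 2 + (p.2 - q.2) ^ 2) / (1 - v ^ 2) ^ 2 := by
    field_simp
    rw [hsq]
    ring
  rw [EuclideanSpace.norm_eq, Fin.sum_univ_two]
  simp only [gmap, PiLp.sub_apply, WithLp.equiv_symm_apply, Real.norm_eq_abs, sq_abs,
    Matrix.cons_val_zero, Matrix.cons_val_one]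
  rw [hcoords, Real.sqrt_div' _ (by positivity), Real.sqrt_sq hw.le]

theorem Tv_eq_norm_gmap_sub_add {v : ℝ} (hv : v ^ 2 < 1) (p q : ℝ × ℝ) :
    Tv v p q = ‖gmap v q - gmap v p‖ + (v * q.2 / (1 - v ^ 2) - v * p.2 / (1 - v ^ 2)) := by
  rw [norm_gmap_sub hv, Tv]
  ring

theorem stmt16_general (v : ℝ) (hv0 : 0 < v) (hv1 : v < 1) (s f : ℝ × ℝ) (n : ℕ)
    (q : Fin (n + 1) → ℝ × ℝ)
    (Time Len : Equiv.Perm (Fin (n + 1)) → ℝ)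
    (hTime : ∀ σ, Time σ
      = Tv v s (q (σ 0))
        + (∑ i : Fin n, Tv v (q (σ i.castSucc)) (q (σ i.succ)))
        + Tv v (q (σ (Fin.last n))) f)
    (hLen : ∀ σ, Len σ
      = ‖gmap v (q (σ 0)) - gmap v s‖
        + (∑ i : Fin n, ‖gmap v (q (σ i.succ)) - gmap v (q (σ i.castSucc))‖)
        + ‖gmap v f - gmap v (q (σ (Fin.last n)))‖) :
    (∀ σ, Time σ - Len σ = v * (f.2 - s.2) / (1 - v ^ 2)) ∧
    (∀ σ, (∀ τ, Time σ ≤ Time τ) ↔ (∀ τ, Len σ ≤ Len τ)) := by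
  have hv : v ^ 2 < 1 := by nlinarith
  have hgap : ∀ σ, Time σ - Len σ = v * (f.2 - s.2) / (1 - v ^ 2) := by
    intro σ
    have hpath := path_cost_add_potential (Tv_eq_norm_gmap_sub_add hv) s f (q ∘ σ)
    simp only [Function.comp_apply] at hpath
    rw [hTime σ, hLen σ, hpath]
    ring
  refine ⟨hgap, fun σ ↦ ⟨fun h τ ↦ ?_, fun h τ ↦ ?_⟩⟩ <;>
    linarith [h τ, hgap σ, hgap τ]

/-- Order-optimality transfer under the transformation `g`:
for every ordering `σ` of the distinct points `q₁,…,qₙ`,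
`Time(σ) − Len(σ) = v(y_f − y_s)/(1 − v²)`; in particular `σ` minimizes `Time`
iff it minimizes `Len`. -/
theorem stmt16 (v : ℝ) (hv0 : 0 < v) (hv1 : v < 1) (s f : ℝ × ℝ) (n : ℕ)
    (q : Fin (n + 1) → ℝ × ℝ) (hq : Function.Injective q)
    (Time Len : Equiv.Perm (Fin (n + 1)) → ℝ)
    (hTime : ∀ σ, Time σ
      = Tv v s (q (σ 0))
        + (∑ i : Fin n, Tv v (q (σ i.castSucc)) (q (σ i.succ)))
        + Tv v (q (σ (Fin.last n))) f)
    (hLen : ∀ σ, Len σ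
      = ‖gmap v (q (σ 0)) - gmap v s‖
        + (∑ i : Fin n, ‖gmap v (q (σ i.succ)) - gmap v (q (σ i.castSucc))‖)
        + ‖gmap v f - gmap v (q (σ (Fin.last n)))‖) :
    (∀ σ, Time σ - Len σ = v * (f.2 - s.2) / (1 - v ^ 2)) ∧
    (∀ σ, (∀ τ, Time σ ≤ Time τ) ↔ (∀ τ, Len σ ≤ Len τ)) :=
  stmt16_general v hv0 hv1 s f n q Time Len hTime hLen
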